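/- Let G be a graph of maximum degree Δ and ε < 1/5. If x and y are dense vertices in the same connected component of the graph induced by friend edges on dense vertices, then x and y are at distance at most 2 in G (i.e., every such component has weak diameter at most 2). -/

import Mathlib

open Finset

attribute [local instance] Classical.propDecidable

variable {V : Type*}

/-- `uv` is a friend edge: they are adjacent and share at least `(1-ε)Δ` neighbors. -/
def friendAdj [Fintype V] [DecidableEq V] (G : SimpleGraph V) [DecidableRel G.Adj]
    (Δ : ℕ) (ε : ℝ) (u v : V) : Prop :=
  G.Adj u v ∧ (1 - ε) * (Δ : ℝ) ≤ ((G.neighborFinset u ∩ G.neighborFinset v).card : ℝ)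

/-- The friends of `v`. -/
noncomputable def friends [Fintype V] [DecidableEq V] (G : SimpleGraph V) [DecidableRel G.Adj]
    (Δ : ℕ) (ε : ℝ) (v : V) : Finset V :=
  Finset.univ.filter (fun w => friendAdj G Δ ε v w)

/-- `v` is dense: it has at least `(1-ε)Δ` friends. -/
def isDense [Fintype V] [DecidableEq V] (G : SimpleGraph V) [DecidableRel G.Adj]
    (Δ : ℕ) (ε : ℝ) (v : V) : Prop :=
  (1 - ε) * (Δ : ℝ) ≤ ((friends G Δ ε v).card : ℝ)

/-- The graph on dense vertices whose edges are the friend edges; its connected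
components are the almost-cliques. -/
def friendGraph [Fintype V] [DecidableEq V] (G : SimpleGraph V) [DecidableRel G.Adj]
    (Δ : ℕ) (ε : ℝ) : SimpleGraph V where
  Adj u v := friendAdj G Δ ε u v ∧ isDense G Δ ε u ∧ isDense G Δ ε v
  symm := ⟨by
    rintro u v ⟨⟨hadj, hcard⟩, hu, hv⟩
    exact ⟨⟨hadj.symm, by rwa [Finset.inter_comm]⟩, hv, hu⟩⟩
  loopless := ⟨fun v h => G.loopless.irrefl v h.1.1⟩

/-!
Along a friend edge `ub` the sets `N u ∩ N b` and `N b ∩ N c` both lie in `N b`, so they overlap: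
common neighbourhoods of size `(1-ε)Δ` and `(1-2ε)Δ` chain to one of size `(1-3ε)Δ > 2εΔ`.
Between two dense vertices, more than `2εΔ` common neighbours force a common friend `f`, and
chaining through `f` lifts the common neighbourhood back to `(1-2ε)Δ`. Hence any two vertices of a
component share at least `(1-2ε)Δ > 0` neighbours.
-/

open SimpleGraph

section AlmostClique

variable [Fintype V] [DecidableEq V] (G : SimpleGraph V) [DecidableRel G.Adj]

theorem card_inter_neighborFinset_add_le (a b c : V) :
    #(G.neighborFinset a ∩ G.neighborFinset b) + #(G.neighborFinset b ∩ G.neighborFinset c)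
      ≤ #(G.neighborFinset a ∩ G.neighborFinset c) + G.degree b := by
  have hinter : (G.neighborFinset a ∩ G.neighborFinset b) ∩ (G.neighborFinset b ∩ G.neighborFinset c)
      ⊆ G.neighborFinset a ∩ G.neighborFinset c := fun z hz => by
    simp only [mem_inter] at hz ⊢
    exact ⟨hz.1.1, hz.2.2⟩
  rw [← card_union_add_card_inter, ← card_neighborFinset_eq_degree]
  exact (add_le_add (card_le_card (union_subset inter_subset_right inter_subset_left))
    (card_le_card hinter)).trans_eq (add_comm _ _)

theorem dist_le_two_of_mem_inter_neighborFinset {x y s : V}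
    (hs : s ∈ G.neighborFinset x ∩ G.neighborFinset y) : G.dist x y ≤ 2 := by
  simp only [mem_inter, mem_neighborFinset] at hs
  simpa using G.dist_le (Walk.cons hs.1 (Walk.cons hs.2.symm Walk.nil))

variable {G} {Δ : ℕ} {ε : ℝ}

theorem friends_subset_neighborFinset (v : V) : friends G Δ ε v ⊆ G.neighborFinset v :=
  fun _ hw => (G.mem_neighborFinset _ _).mpr (mem_filter.mp hw).2.1

theorem card_neighborFinset_sdiff_friends_le {v : V} (hv : isDense G Δ ε v)
    (hdeg : G.degree v ≤ Δ) : (#(G.neighborFinset v \ friends G Δ ε v) : ℝ) ≤ ε * Δ := by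
  have hsub := friends_subset_neighborFinset (G := G) (Δ := Δ) (ε := ε) v
  rw [card_sdiff_of_subset hsub, Nat.cast_sub (card_le_card hsub), card_neighborFinset_eq_degree]
  have : (G.degree v : ℝ) ≤ Δ := by exact_mod_cast hdeg
  unfold isDense at hv
  linarith

theorem exists_common_friend {x w : V} (hx : isDense G Δ ε x) (hw : isDense G Δ ε w)
    (hdx : G.degree x ≤ Δ) (hdw : G.degree w ≤ Δ)
    (hcommon : 2 * ε * Δ < #(G.neighborFinset x ∩ G.neighborFinset w)) :
    ∃ f, f ∈ friends G Δ ε x ∧ f ∈ friends G Δ ε w := by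
  by_contra! hno
  have hsub : G.neighborFinset x ∩ G.neighborFinset w ⊆
      (G.neighborFinset x \ friends G Δ ε x) ∪ (G.neighborFinset w \ friends G Δ ε w) := by
    intro f hf
    rw [mem_inter] at hf
    by_cases hfx : f ∈ friends G Δ ε x
    · exact mem_union_right _ (mem_sdiff.mpr ⟨hf.2, hno f hfx⟩)
    · exact mem_union_left _ (mem_sdiff.mpr ⟨hf.1, hfx⟩)
  have hcard : (#(G.neighborFinset x ∩ G.neighborFinset w) : ℝ) ≤
      #(G.neighborFinset x \ friends G Δ ε x) + #(G.neighborFinset w \ friends G Δ ε w) := by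
    exact_mod_cast (card_le_card hsub).trans (card_union_le _ _)
  linarith [card_neighborFinset_sdiff_friends_le hx hdx, card_neighborFinset_sdiff_friends_le hw hdw]

theorem le_card_inter_neighborFinset {a b c : V} (hdeg : G.degree b ≤ Δ) {α β : ℝ}
    (hab : α * Δ ≤ #(G.neighborFinset a ∩ G.neighborFinset b))
    (hbc : β * Δ ≤ #(G.neighborFinset b ∩ G.neighborFinset c)) :
    (α + β - 1) * Δ ≤ #(G.neighborFinset a ∩ G.neighborFinset c) := by
  have hsum : (#(G.neighborFinset a ∩ G.neighborFinset b) : ℝ)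
      + #(G.neighborFinset b ∩ G.neighborFinset c)
      ≤ #(G.neighborFinset a ∩ G.neighborFinset c) + G.degree b := by
    exact_mod_cast card_inter_neighborFinset_add_le G a b c
  have : (G.degree b : ℝ) ≤ Δ := by exact_mod_cast hdeg
  linarith

theorem le_card_inter_neighborFinset_of_isDense (hΔ : ∀ v, G.degree v ≤ Δ) {x w : V}
    (hx : isDense G Δ ε x) (hw : isDense G Δ ε w)
    (hcommon : 2 * ε * Δ < #(G.neighborFinset x ∩ G.neighborFinset w)) :
    (1 - 2 * ε) * Δ ≤ #(G.neighborFinset x ∩ G.neighborFinset w) := by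
  obtain ⟨f, hfx, hfw⟩ := exists_common_friend hx hw (hΔ x) (hΔ w) hcommon
  have hxf := (mem_filter.mp hfx).2.2
  have hwf : (1 - ε) * Δ ≤ #(G.neighborFinset f ∩ G.neighborFinset w) := by
    rw [inter_comm]
    exact (mem_filter.mp hfw).2.2
  convert le_card_inter_neighborFinset (hΔ f) hxf hwf using 2
  ring

theorem pos_of_friendGraph_adj (hΔ : ∀ v, G.degree v ≤ Δ) {u v : V}
    (h : (friendGraph G Δ ε).Adj u v) : 0 < Δ :=
  (G.degree_pos_iff_exists_adj u).mpr ⟨v, h.1.1⟩ |>.trans_le (hΔ u)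

theorem le_card_inter_neighborFinset_of_walk (hΔ : ∀ v, G.degree v ≤ Δ) (hε : ε < 1 / 5)
    {u v : V} (p : (friendGraph G Δ ε).Walk u v) (hv : isDense G Δ ε v) :
    (1 - 2 * ε) * Δ ≤ #(G.neighborFinset u ∩ G.neighborFinset v) := by
  induction p with
  | @nil w =>
    rw [inter_self, card_neighborFinset_eq_degree]
    have hfriends : (#(friends G Δ ε w) : ℝ) ≤ G.degree w := by
      rw [← card_neighborFinset_eq_degree]
      exact_mod_cast card_le_card (friends_subset_neighborFinset w)
    have : (G.degree w : ℝ) ≤ Δ := by exact_mod_cast hΔ w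
    -- `(1 - ε)Δ ≤ #friends ≤ deg ≤ Δ` forces `εΔ ≥ 0`
    unfold isDense at hv
    linarith
  | cons hub _ ih =>
    have hΔpos : (0 : ℝ) < Δ := by exact_mod_cast pos_of_friendGraph_adj hΔ hub
    have hchain := le_card_inter_neighborFinset (hΔ _) hub.1.2 (ih hv)
    refine le_card_inter_neighborFinset_of_isDense hΔ hub.2.1 hv ?_
    nlinarith

end AlmostClique

theorem stmt_1_general [Fintype V] [DecidableEq V] (G : SimpleGraph V) [DecidableRel G.Adj]
    (Δ : ℕ) (ε : ℝ) (hΔ : ∀ w, G.degree w ≤ Δ) (hε : ε < 1/5)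
    (x y : V) (hy : isDense G Δ ε y)
    (hreach : (friendGraph G Δ ε).Reachable x y) :
    G.dist x y ≤ 2 := by
  obtain ⟨p⟩ := hreach
  cases p with
  | nil => simp
  | cons hxb q =>
    have hΔpos : (0 : ℝ) < Δ := by exact_mod_cast pos_of_friendGraph_adj hΔ hxb
    have hcommon := le_card_inter_neighborFinset_of_walk hΔ hε (Walk.cons hxb q) hy
    obtain ⟨s, hs⟩ : (G.neighborFinset x ∩ G.neighborFinset y).Nonempty := by
      rw [← card_pos, ← Nat.cast_pos (α := ℝ)]
      nlinarith
    exact dist_le_two_of_mem_inter_neighborFinset G hs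

/-- If `x` and `y` are dense vertices in the same connected component of the graph of
friend edges on dense vertices, then `x` and `y` are at distance at most 2 in `G`
(every almost-clique has weak diameter at most 2). -/
theorem stmt_1 [Fintype V] [DecidableEq V] (G : SimpleGraph V) [DecidableRel G.Adj]
    (Δ : ℕ) (ε : ℝ) (hΔ : ∀ w, G.degree w ≤ Δ) (hε0 : 0 < ε) (hε : ε < 1/5)
    (x y : V) (hx : isDense G Δ ε x) (hy : isDense G Δ ε y)
    (hreach : (friendGraph G Δ ε).Reachable x y) :
    G.dist x y ≤ 2 :=
  stmt_1_general G Δ ε hΔ hε x y hy hreach
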